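/- (Heat semigroup smoothing from $\dot H^{d/p-1}_{\mathcal{L}^{p,r}}$.) Let $1 < p \leq d$, $1 \leq r < \infty$, and $\tilde p$ with $\frac{1}{p} - \frac{1}{d} < \frac{1}{\tilde p} < \frac{1}{p}$, and set $\alpha = d(\frac{1}{p} - \frac{1}{\tilde p})$. Then there is a constant $C$ such that for all $u_0 \in \dot H^{\frac{d}{p}-1}_{\mathcal{L}^{p,r}}(\mathbb{R}^d)$, $\sup_{t > 0} t^{\alpha/2} \|e^{t\Delta} u_0\|_{\dot H^{\frac{d}{p}-1}_{\mathcal{L}^{\tilde p, 1}}} \leq C \|u_0\|_{\dot H^{\frac{d}{p}-1}_{\mathcal{L}^{p,r}}}$, and moreover $\lim_{t \to 0} t^{\alpha/2} \|e^{t\Delta} u_0\|_{\dot H^{\frac{d}{p}-1}_{\mathcal{L}^{\tilde p, 1}}} = 0$. -/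

import Mathlib

open MeasureTheory ENNReal Filter
open scoped FourierTransform ENNReal NNReal

noncomputable section

/-- The decreasing rearrangement of `f` with respect to the measure `μ`. -/
def rearr {α : Type*} [MeasurableSpace α] (μ : Measure α) (f : α → ℝ≥0∞) (t : ℝ) : ℝ≥0∞ :=
  sInf {τ : ℝ≥0∞ | μ {x | τ < f x} ≤ ENNReal.ofReal t}

/-- The Lorentz `L^{p,r}` (quasi-)norm, defined via the decreasing rearrangement. -/
def lorentzNorm {α : Type*} [MeasurableSpace α] (μ : Measure α) (f : α → ℝ≥0∞)
    (p r : ℝ≥0∞) : ℝ≥0∞ :=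
  if r = ∞ then ⨆ t ∈ Set.Ioi (0:ℝ), ENNReal.ofReal t ^ (1/p).toReal * rearr μ f t
  else (∫⁻ t in Set.Ioi (0:ℝ),
      (ENNReal.ofReal t ^ (1/p).toReal * rearr μ f t) ^ r.toReal / ENNReal.ofReal t)
    ^ (1/r.toReal)

/-- The conjugate exponent `p'` with `1/p + 1/p' = 1`. -/
def dualExp (p : ℝ≥0∞) : ℝ≥0∞ := (1 - 1/p)⁻¹

abbrev Esp (d : ℕ) := EuclideanSpace ℝ (Fin d)

/-- Fourier-side Sobolev-Fourier-Lorentz norm: the Lorentz `L^{p',r}` norm of `|ξ|^s g(ξ)`. -/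
def sflNorm (d : ℕ) (s : ℝ) (p r : ℝ≥0∞) (g : Esp d → ℂ) : ℝ≥0∞ :=
  lorentzNorm volume (fun ξ => ENNReal.ofReal (‖ξ‖ ^ s) * ‖g ξ‖₊) (dualExp p) r

/-- The Sobolev-Fourier-Lorentz norm `‖u‖_{Ḣ^s_{𝓛^{p,r}}} = ‖|ξ|^s û(ξ)‖_{L^{p',r}}`. -/
def HsL (d : ℕ) (s : ℝ) (p r : ℝ≥0∞) (f : Esp d → ℂ) : ℝ≥0∞ :=
  sflNorm d s p r (𝓕 f)

/-- The Fourier-Lorentz norm `‖f‖_{𝓛^{p,r}} = ‖f̂‖_{L^{p',r}}`. -/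
def FLnorm (d : ℕ) (p r : ℝ≥0∞) (f : Esp d → ℂ) : ℝ≥0∞ :=
  lorentzNorm volume (fun ξ => (‖𝓕 f ξ‖₊ : ℝ≥0∞)) (dualExp p) r

end

/-!
Write `F(ξ) = |ξ|^{d/p-1} |û₀(ξ)|` and `f^*` for decreasing rearrangements. Since
`(e^{-t|·|²} F)^*(τ) ≤ (e^{-t|·|²})^*(τ/2) F^*(τ/2)` and the Gaussian's rearrangement is
`exp(-t (τ/|B₁|)^{2/d})`, the substitution `τ = t^{-d/2} σ` bounds
`t^{α/2} ‖e^{tΔ}u₀‖_{Ḣ^{d/p-1}_{𝓛^{p̃,1}}}` by the integral of the fixed kernel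
`σ^{α/d-1} exp(-(σ/2|B₁|)^{2/d})`, integrable on `(0, ∞)`, against `u^{1/p'} F^*(u/2)` at
`u = t^{-d/2} σ`. This function is bounded by a multiple of the `L^{p',r}` norm of `F` (weak type)
and, that norm being finite, tends to `0` as `u → ∞` (the tail of a convergent integral).
This gives the uniform bound, and dominated convergence as `t → 0` gives the limit.
-/

open Set Metric Topology

section Rearrangement

variable {α : Type*} [MeasurableSpace α] {μ : Measure α} {f g : α → ℝ≥0∞}

lemma rearr_antitone : Antitone (rearr μ f) := fun _ _ hst =>
  sInf_le_sInf fun _ hτ => hτ.trans (ENNReal.ofReal_le_ofReal hst)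

lemma measurable_rearr : Measurable (rearr μ f) := rearr_antitone.measurable

lemma rearr_le_of_measure_le {t : ℝ} {τ : ℝ≥0∞} (h : μ {x | τ < f x} ≤ ENNReal.ofReal t) :
    rearr μ f t ≤ τ :=
  sInf_le h

lemma measure_rearr_lt_le (t : ℝ) : μ {x | rearr μ f t < f x} ≤ ENNReal.ofReal t := by
  set S := {τ : ℝ≥0∞ | μ {x | τ < f x} ≤ ENNReal.ofReal t}
  have hS : S.Nonempty := ⟨∞, by simp [S]⟩
  obtain ⟨u, hu_anti, hu_tend, hu_mem⟩ := exists_seq_tendsto_sInf hS (OrderBot.bddBelow S)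
  have hunion : {x | sInf S < f x} = ⋃ n, {x | u n < f x} := by
    ext x
    simp only [mem_ofPred_eq, mem_iUnion]
    exact ⟨fun hx => (hu_tend.eventually_lt_const hx).exists,
      fun ⟨n, hn⟩ => (sInf_le (hu_mem n)).trans_lt hn⟩
  have hmono : Monotone fun n => {x | u n < f x} := fun _ _ hmn _ hx => (hu_anti hmn).trans_lt hx
  rw [rearr, hunion, hmono.measure_iUnion]
  exact iSup_le hu_mem

lemma rearr_mul_le {t : ℝ} (ht : 0 ≤ t) :
    rearr μ (fun x => f x * g x) (t + t) ≤ rearr μ f t * rearr μ g t := by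
  refine rearr_le_of_measure_le ?_
  have hsub : {x | rearr μ f t * rearr μ g t < f x * g x} ⊆
      {x | rearr μ f t < f x} ∪ {x | rearr μ g t < g x} := by
    intro x hx
    by_contra hc
    simp only [mem_union, mem_ofPred_eq, not_or, not_lt] at hc
    exact hx.not_ge (mul_le_mul' hc.1 hc.2)
  calc _ ≤ μ {x | rearr μ f t < f x} + μ {x | rearr μ g t < g x} :=
        (measure_mono hsub).trans (measure_union_le _ _)
    _ ≤ ENNReal.ofReal t + ENNReal.ofReal t :=
        add_le_add (measure_rearr_lt_le t) (measure_rearr_lt_le t)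
    _ = ENNReal.ofReal (t + t) := (ENNReal.ofReal_add ht ht).symm

lemma rpow_mul_rearr_rpow_le_setLIntegral {γ ρ u : ℝ} (hγ : 0 ≤ γ) (hρ : 0 ≤ ρ) (hu : 0 < u) :
    (ENNReal.ofReal u ^ γ * rearr μ f u) ^ ρ ≤ 2 ^ (1 + γ * ρ) *
      ∫⁻ x in Ioi (u / 2), (ENNReal.ofReal x ^ γ * rearr μ f x) ^ ρ / ENNReal.ofReal x := by
  set h := ENNReal.ofReal (u / 2)
  set Y := (h ^ γ * rearr μ f u) ^ ρ
  have hhalf : ENNReal.ofReal u = 2 * h := by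
    rw [← ENNReal.ofReal_ofNat, ← ENNReal.ofReal_mul zero_le_two, mul_div_cancel₀ _ two_ne_zero]
  have hlhs : (ENNReal.ofReal u ^ γ * rearr μ f u) ^ ρ = 2 ^ (γ * ρ) * Y := by
    rw [hhalf, ENNReal.mul_rpow_of_nonneg _ _ hγ, mul_assoc, ENNReal.mul_rpow_of_nonneg _ _ hρ,
      ← ENNReal.rpow_mul]
  -- on `(u/2, u)` the integrand is at least `Y / u`
  have hY : Y ≤ 2 * ∫⁻ x in Ioo (u / 2) u,
      (ENNReal.ofReal x ^ γ * rearr μ f x) ^ ρ / ENNReal.ofReal x := by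
    calc Y = 2 * (Y / (2 * h) * h) := by
          rw [← ENNReal.mul_div_right_comm, ENNReal.mul_div_mul_right _ _ (by simpa [h] using hu)
            ENNReal.ofReal_ne_top, ENNReal.mul_div_cancel two_ne_zero ENNReal.ofNat_ne_top]
      _ = 2 * ∫⁻ _ in Ioo (u / 2) u, Y / ENNReal.ofReal u := by
          rw [setLIntegral_const, Real.volume_Ioo, show u - u / 2 = u / 2 by ring, hhalf]
      _ ≤ _ := by
          refine mul_le_mul_right (lintegral_mono_ae ?_) _
          filter_upwards [ae_restrict_mem measurableSet_Ioo] with x hx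
          exact ENNReal.div_le_div (ENNReal.rpow_le_rpow (mul_le_mul'
            (ENNReal.rpow_le_rpow (ENNReal.ofReal_le_ofReal hx.1.le) hγ) (rearr_antitone hx.2.le))
            hρ) (ENNReal.ofReal_le_ofReal hx.2.le)
  calc _ = 2 ^ (γ * ρ) * Y := hlhs
    _ ≤ 2 ^ (γ * ρ) * (2 * ∫⁻ x in Ioi (u / 2),
          (ENNReal.ofReal x ^ γ * rearr μ f x) ^ ρ / ENNReal.ofReal x) :=
        mul_le_mul_right (hY.trans (mul_le_mul_right (lintegral_mono_set Ioo_subset_Ioi_self) _)) _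
    _ = _ := by
        rw [← mul_assoc, ENNReal.rpow_add _ _ two_ne_zero ENNReal.ofNat_ne_top, ENNReal.rpow_one,
          mul_comm (2 ^ (γ * ρ))]

end Rearrangement

lemma tendsto_setLIntegral_Ioi_atTop {μ : Measure ℝ} {f : ℝ → ℝ≥0∞} {a : ℝ}
    (hf : ∫⁻ x in Ioi a, f x ∂μ ≠ ∞) :
    Tendsto (fun v => ∫⁻ x in Ioi v, f x ∂μ) atTop (𝓝 0) := by
  set ν := (μ.restrict (Ioi a)).withDensity f
  have hν : ∀ s, MeasurableSet s → ν s = ∫⁻ x in s ∩ Ioi a, f x ∂μ := fun s hs => by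
    rw [withDensity_apply _ hs, Measure.restrict_restrict hs]
  have hlim := tendsto_measure_iInter_atTop (μ := ν) (s := Ioi)
    (fun v => measurableSet_Ioi.nullMeasurableSet) (fun _ _ h => Ioi_subset_Ioi h)
    ⟨a, by rw [hν _ measurableSet_Ioi, inter_self]; exact hf⟩
  rw [show ⋂ v : ℝ, Ioi v = ∅ from iInter_eq_empty_iff.mpr fun x => ⟨x, lt_irrefl x⟩,
    measure_empty] at hlim
  refine hlim.congr' ?_
  filter_upwards [eventually_ge_atTop a] with v hv
  rw [Function.comp_apply, hν _ measurableSet_Ioi, inter_eq_left.mpr (Ioi_subset_Ioi hv)]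

section Lorentz

variable {α : Type*} [MeasurableSpace α] {μ : Measure α} {f : α → ℝ≥0∞} {q r : ℝ≥0∞}

lemma lorentzNorm_of_ne_top (hr : r ≠ ∞) :
    lorentzNorm μ f q r = (∫⁻ t in Ioi 0,
      (ENNReal.ofReal t ^ (1 / q).toReal * rearr μ f t) ^ r.toReal / ENNReal.ofReal t)
        ^ (1 / r.toReal) :=
  if_neg hr

lemma lorentzNorm_one :
    lorentzNorm μ f q 1 =
      ∫⁻ t in Ioi 0, ENNReal.ofReal t ^ (1 / q).toReal * rearr μ f t / ENNReal.ofReal t := by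
  simp [lorentzNorm_of_ne_top one_ne_top]

lemma ofReal_rpow_mul_rearr_le_rpow_setLIntegral (hr0 : r ≠ 0) (hr : r ≠ ∞) {u : ℝ}
    (hu : 0 < u) :
    ENNReal.ofReal u ^ (1 / q).toReal * rearr μ f u ≤
      (2 ^ (1 + (1 / q).toReal * r.toReal) * ∫⁻ x in Ioi (u / 2),
        (ENNReal.ofReal x ^ (1 / q).toReal * rearr μ f x) ^ r.toReal / ENNReal.ofReal x)
          ^ (1 / r.toReal) := by
  have hρ : 0 < r.toReal := ENNReal.toReal_pos hr0 hr
  rw [one_div r.toReal, ENNReal.le_rpow_inv_iff hρ]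
  exact rpow_mul_rearr_rpow_le_setLIntegral ENNReal.toReal_nonneg hρ.le hu

lemma ofReal_rpow_mul_rearr_le_lorentzNorm (hr0 : r ≠ 0) (hr : r ≠ ∞) {u : ℝ} (hu : 0 < u) :
    ENNReal.ofReal u ^ (1 / q).toReal * rearr μ f u ≤
      2 ^ ((1 / q).toReal + 1 / r.toReal) * lorentzNorm μ f q r := by
  have hρ : 0 < r.toReal := ENNReal.toReal_pos hr0 hr
  refine (ofReal_rpow_mul_rearr_le_rpow_setLIntegral hr0 hr hu).trans ?_
  rw [lorentzNorm_of_ne_top hr, ENNReal.mul_rpow_of_nonneg _ _ (one_div_nonneg.mpr hρ.le),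
    ← ENNReal.rpow_mul, add_mul, one_mul, mul_assoc, mul_one_div_cancel hρ.ne', mul_one,
    add_comm]
  gcongr
  exact (half_pos hu).le

lemma tendsto_ofReal_rpow_mul_rearr_atTop (hr0 : r ≠ 0) (hr : r ≠ ∞)
    (hf : lorentzNorm μ f q r ≠ ∞) :
    Tendsto (fun u => ENNReal.ofReal u ^ (1 / q).toReal * rearr μ f u) atTop (𝓝 0) := by
  have hρ : 0 < r.toReal := ENNReal.toReal_pos hr0 hr
  rw [lorentzNorm_of_ne_top hr, ne_eq, ENNReal.rpow_eq_top_iff_of_pos (by positivity)] at hf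
  have htail := (tendsto_setLIntegral_Ioi_atTop hf).comp (tendsto_id.atTop_div_const two_pos)
  set c : ℝ≥0∞ := 2 ^ (1 + (1 / q).toReal * r.toReal)
  have hc : c ≠ ∞ := ENNReal.rpow_ne_top_of_nonneg (by positivity) ENNReal.ofNat_ne_top
  have hmul := ENNReal.Tendsto.const_mul htail (Or.inr hc)
  rw [mul_zero] at hmul
  have hbound := ((ENNReal.continuous_rpow_const (y := 1 / r.toReal)).tendsto 0).comp hmul
  rw [ENNReal.zero_rpow_of_pos (one_div_pos.mpr hρ)] at hbound
  refine tendsto_of_tendsto_of_tendsto_of_le_of_le' tendsto_const_nhds hbound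
    (Eventually.of_forall fun _ => zero_le) ?_
  filter_upwards [eventually_gt_atTop 0] with u hu
  exact ofReal_rpow_mul_rearr_le_rpow_setLIntegral hr0 hr hu

end Lorentz

lemma lintegral_Ioi_comp_mul_left {c : ℝ} (hc : 0 < c) (g : ℝ → ℝ≥0∞) :
    ∫⁻ x in Ioi 0, g (c * x) = ENNReal.ofReal c⁻¹ * ∫⁻ x in Ioi 0, g x := by
  have he : MeasurableEmbedding (c * ·) := (Homeomorph.mulLeft₀ c hc.ne').measurableEmbedding
  have hpre : (c * ·) ⁻¹' Ioi 0 = Ioi 0 := by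
    ext x
    simp [mul_pos_iff_of_pos_left hc]
  calc ∫⁻ x in Ioi 0, g (c * x)
      = ∫⁻ y, g y ∂(Measure.map (c * ·) (volume.restrict (Ioi 0))) := (he.lintegral_map g).symm
    _ = ∫⁻ y, g y ∂((Measure.map (c * ·) volume).restrict (Ioi 0)) := by
        rw [Measure.restrict_map he.measurable measurableSet_Ioi, hpre]
    _ = ENNReal.ofReal c⁻¹ * ∫⁻ x in Ioi 0, g x := by
        rw [Real.map_volume_mul_left hc.ne', abs_of_pos (inv_pos.mpr hc), Measure.restrict_smul,
          lintegral_smul_measure, smul_eq_mul]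

lemma lintegral_Ioi_heat_rescale {d a β t : ℝ} (hd : 0 < d) (hβ : 0 ≤ β) (ht : 0 < t)
    (M : ℝ → ℝ≥0∞) :
    ENNReal.ofReal (t ^ (d * a / 2)) *
      ∫⁻ τ in Ioi 0, ENNReal.ofReal (τ ^ (a - 1) * Real.exp (-(t * (τ / β) ^ (2 / d)))) * M τ =
    ∫⁻ σ in Ioi 0, ENNReal.ofReal (σ ^ (a - 1) * Real.exp (-(σ / β) ^ (2 / d))) *
      M (t ^ (-(d / 2)) * σ) := by
  set c := t ^ (-(d / 2))
  have hc : 0 < c := by positivity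
  have hexp (σ : ℝ) (hσ : 0 < σ) : t * (c * σ / β) ^ (2 / d) = (σ / β) ^ (2 / d) := by
    rw [mul_div_assoc, Real.mul_rpow hc.le (by positivity), ← Real.rpow_mul ht.le,
      show -(d / 2) * (2 / d) = -1 by field_simp, Real.rpow_neg_one, mul_inv_cancel_left₀ ht.ne']
  have hpow (σ : ℝ) (hσ : 0 < σ) : t ^ (d * a / 2) * c * (c * σ) ^ (a - 1) = σ ^ (a - 1) := by
    have hca : c * c ^ (a - 1) = t ^ (-(d * a / 2)) := by
      rw [show c * c ^ (a - 1) = c ^ (1 + (a - 1)) by rw [Real.rpow_add hc, Real.rpow_one],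
        ← Real.rpow_mul ht.le]
      ring_nf
    rw [Real.mul_rpow hc.le hσ.le, ← mul_assoc, mul_assoc _ c, hca, ← Real.rpow_add ht,
      add_neg_cancel, Real.rpow_zero, one_mul]
  set g : ℝ → ℝ≥0∞ := fun τ =>
    ENNReal.ofReal (τ ^ (a - 1) * Real.exp (-(t * (τ / β) ^ (2 / d)))) * M τ
  have hg : ∀ σ ∈ Ioi (0 : ℝ),
      ENNReal.ofReal (σ ^ (a - 1) * Real.exp (-(σ / β) ^ (2 / d))) * M (c * σ) =
        ENNReal.ofReal (t ^ (d * a / 2) * c) * g (c * σ) := fun σ hσ => by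
    rw [← hexp σ hσ, ← hpow σ hσ, mul_assoc (t ^ (d * a / 2) * c),
      ENNReal.ofReal_mul (by positivity), mul_assoc]
  rw [setLIntegral_congr_fun measurableSet_Ioi hg, lintegral_const_mul' _ _ ENNReal.ofReal_ne_top,
    lintegral_Ioi_comp_mul_left hc, ENNReal.ofReal_mul (by positivity), mul_assoc,
    ← mul_assoc _ _ (∫⁻ _ in _, _), ← ENNReal.ofReal_mul hc.le, mul_inv_cancel₀ hc.ne',
    ENNReal.ofReal_one, one_mul]

lemma lintegral_rpow_mul_exp_neg_div_rpow_lt_top {a β e : ℝ} (ha : 0 < a) (hβ : 0 < β)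
    (he : 0 < e) :
    ∫⁻ σ in Ioi 0, ENNReal.ofReal (σ ^ (a - 1) * Real.exp (-(σ / β) ^ e)) < ∞ := by
  refine Integrable.lintegral_lt_top ((integrableOn_rpow_mul_exp_neg_mul_rpow (s := a - 1)
    (by linarith) he (Real.rpow_pos_of_pos hβ (-e))).congr_fun (fun σ hσ => ?_) measurableSet_Ioi)
  dsimp only
  rw [Real.div_rpow (le_of_lt hσ) hβ.le, div_eq_inv_mul, neg_mul, Real.rpow_neg hβ.le]

section KernelAveraging

variable {K M : ℝ → ℝ≥0∞} {B : ℝ≥0∞}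

lemma setLIntegral_mul_comp_mul_le (hB : B ≠ ∞) (hMB : ∀ u, 0 < u → M u ≤ B) {c : ℝ}
    (hc : 0 < c) :
    ∫⁻ σ in Ioi 0, K σ * M (c * σ) ≤ (∫⁻ σ in Ioi 0, K σ) * B := by
  rw [← lintegral_mul_const' _ _ hB]
  exact setLIntegral_mono' measurableSet_Ioi fun σ hσ => mul_le_mul_right (hMB _ (mul_pos hc hσ)) _

lemma tendsto_setLIntegral_mul_comp_mul_atTop (hK : AEMeasurable K (volume.restrict (Ioi 0)))
    (hK_fin : ∫⁻ σ in Ioi 0, K σ ≠ ∞) (hM : Measurable M) (hB : B ≠ ∞)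
    (hMB : ∀ u, 0 < u → M u ≤ B) (hM_lim : Tendsto M atTop (𝓝 0)) :
    Tendsto (fun c => ∫⁻ σ in Ioi 0, K σ * M (c * σ)) atTop (𝓝 0) := by
  have := tendsto_lintegral_filter_of_dominated_convergence' (fun σ => K σ * B)
    (Eventually.of_forall fun c => hK.mul (hM.comp (measurable_const_mul c)).aemeasurable)
    (by
      filter_upwards [eventually_gt_atTop 0] with c hc
      filter_upwards [ae_restrict_mem measurableSet_Ioi] with σ hσ
      exact mul_le_mul_right (hMB _ (mul_pos hc hσ)) _)
    (by rw [lintegral_mul_const' _ _ hB]; exact ENNReal.mul_ne_top hK_fin hB)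
    (by
      filter_upwards [ae_restrict_mem measurableSet_Ioi, ae_lt_top' hK hK_fin] with σ hσ hKσ
      simpa using ENNReal.Tendsto.const_mul (hM_lim.comp (tendsto_id.atTop_mul_const hσ))
        (Or.inr hKσ.ne))
  simpa using this

end KernelAveraging

section HeatSmoothing

variable {E : Type*} [NormedAddCommGroup E] [NormedSpace ℝ E] [FiniteDimensional ℝ E]
  [MeasurableSpace E] [BorelSpace E] [Nontrivial E] (μ : Measure E) [μ.IsAddHaarMeasure]

/-- The superlevel sets of the Gaussian are balls, and the ball of volume `u` has radius
`(u / |B₁|)^{1/d}`. -/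
lemma rearr_exp_neg_mul_norm_sq_le {t u : ℝ} (ht : 0 < t) (hu : 0 < u) :
    rearr μ (fun ξ => ENNReal.ofReal (Real.exp (-(t * ‖ξ‖ ^ 2)))) u ≤
      ENNReal.ofReal (Real.exp
        (-(t * (u / (μ (ball 0 1)).toReal) ^ (2 / (Module.finrank ℝ E : ℝ))))) := by
  set d : ℕ := Module.finrank ℝ E
  set ω := (μ (ball (0 : E) 1)).toReal
  have hω : 0 < ω := ENNReal.toReal_pos (measure_ball_pos μ _ one_pos).ne' measure_ball_lt_top.ne
  have hd : (d : ℝ) ≠ 0 := by exact_mod_cast Module.finrank_pos.ne'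
  set R := (u / ω) ^ (1 / (d : ℝ))
  have hR : 0 < R := by positivity
  have hR_pow (n : ℕ) : R ^ n = (u / ω) ^ (n / (d : ℝ)) := by
    rw [← Real.rpow_natCast, ← Real.rpow_mul (by positivity), one_div_mul_eq_div]
  refine rearr_le_of_measure_le (le_of_eq ?_)
  have hball : {ξ : E | ENNReal.ofReal (Real.exp (-(t * (u / ω) ^ (2 / (d : ℝ))))) <
      ENNReal.ofReal (Real.exp (-(t * ‖ξ‖ ^ 2)))} = ball 0 R := by
    ext ξ
    rw [mem_ofPred_eq, mem_ball_zero_iff, ENNReal.ofReal_lt_ofReal_iff (Real.exp_pos _),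
      Real.exp_lt_exp, neg_lt_neg_iff, mul_lt_mul_iff_right₀ ht,
      show (u / ω) ^ (2 / (d : ℝ)) = R ^ 2 by simp [hR_pow],
      pow_lt_pow_iff_left₀ (norm_nonneg _) hR.le two_ne_zero]
  rw [hball, Measure.addHaar_ball _ _ hR.le, hR_pow, div_self hd, Real.rpow_one,
    ← ENNReal.ofReal_toReal (measure_ball_lt_top (μ := μ)).ne,
    ← ENNReal.ofReal_mul (by positivity), div_mul_cancel₀ _ hω.ne']

lemma rearr_exp_neg_mul_norm_sq_mul_le (F : E → ℝ≥0∞) {t τ : ℝ} (ht : 0 < t) (hτ : 0 < τ) :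
    rearr μ (fun ξ => ENNReal.ofReal (Real.exp (-(t * ‖ξ‖ ^ 2))) * F ξ) τ ≤
      ENNReal.ofReal (Real.exp
        (-(t * (τ / (2 * (μ (ball 0 1)).toReal)) ^ (2 / (Module.finrank ℝ E : ℝ))))) *
        rearr μ F (τ / 2) := by
  calc _ = rearr μ (fun ξ => ENNReal.ofReal (Real.exp (-(t * ‖ξ‖ ^ 2))) * F ξ)
        (τ / 2 + τ / 2) := by rw [add_halves]
    _ ≤ _ := (rearr_mul_le (half_pos hτ).le).trans (mul_le_mul_left
        (by simpa only [div_div] using rearr_exp_neg_mul_norm_sq_le μ ht (half_pos hτ)) _)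

lemma ofReal_rpow_mul_rearr_heat_div_le (F : E → ℝ≥0∞) {t τ a γ : ℝ} (ht : 0 < t) (hτ : 0 < τ)
    (hγ : 0 ≤ γ) :
    ENNReal.ofReal τ ^ (a + γ) *
      rearr μ (fun ξ => ENNReal.ofReal (Real.exp (-(t * ‖ξ‖ ^ 2))) * F ξ) τ / ENNReal.ofReal τ ≤
    2 ^ γ * (ENNReal.ofReal (τ ^ (a - 1) * Real.exp
        (-(t * (τ / (2 * (μ (ball 0 1)).toReal)) ^ (2 / (Module.finrank ℝ E : ℝ))))) *
      (ENNReal.ofReal (τ / 2) ^ γ * rearr μ F (τ / 2))) := by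
  have hτ0 : ENNReal.ofReal τ ≠ 0 := by simpa using hτ
  have hdiv : ENNReal.ofReal τ ^ (a + γ) / ENNReal.ofReal τ =
      ENNReal.ofReal τ ^ (a - 1) * ENNReal.ofReal τ ^ γ := by
    rw [← ENNReal.rpow_add _ _ hτ0 ENNReal.ofReal_ne_top, show a - 1 + γ = a + γ - 1 by ring,
      ENNReal.rpow_sub _ _ hτ0 ENNReal.ofReal_ne_top, ENNReal.rpow_one]
  have hhalf : ENNReal.ofReal τ = 2 * ENNReal.ofReal (τ / 2) := by
    rw [← ENNReal.ofReal_ofNat, ← ENNReal.ofReal_mul zero_le_two, mul_div_cancel₀ _ two_ne_zero]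
  calc _ = ENNReal.ofReal τ ^ (a - 1) * ENNReal.ofReal τ ^ γ *
        rearr μ (fun ξ => ENNReal.ofReal (Real.exp (-(t * ‖ξ‖ ^ 2))) * F ξ) τ := by
        rw [ENNReal.mul_div_right_comm, hdiv]
    _ ≤ ENNReal.ofReal τ ^ (a - 1) * ENNReal.ofReal τ ^ γ *
        (ENNReal.ofReal (Real.exp (-(t * (τ / (2 * (μ (ball 0 1)).toReal)) ^
          (2 / (Module.finrank ℝ E : ℝ))))) * rearr μ F (τ / 2)) := by
        gcongr
        exact rearr_exp_neg_mul_norm_sq_mul_le μ F ht hτ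
    _ = _ := by
        rw [hhalf, ENNReal.mul_rpow_of_nonneg _ _ hγ, ← hhalf,
          ENNReal.ofReal_mul (Real.rpow_nonneg hτ.le _), ENNReal.ofReal_rpow_of_pos hτ]
        ring

lemma ofReal_rpow_mul_lorentzNorm_heat_le (F : E → ℝ≥0∞) {q q' : ℝ≥0∞} {t a : ℝ} (ht : 0 < t)
    (hq' : (1 / q').toReal = a + (1 / q).toReal) :
    ENNReal.ofReal (t ^ (Module.finrank ℝ E * a / 2)) *
      lorentzNorm μ (fun ξ => ENNReal.ofReal (Real.exp (-(t * ‖ξ‖ ^ 2))) * F ξ) q' 1 ≤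
    2 ^ (1 / q).toReal * ∫⁻ σ in Ioi 0, ENNReal.ofReal (σ ^ (a - 1) *
        Real.exp (-(σ / (2 * (μ (ball 0 1)).toReal)) ^ (2 / (Module.finrank ℝ E : ℝ)))) *
      (ENNReal.ofReal (t ^ (-(Module.finrank ℝ E / 2 : ℝ)) * σ / 2) ^ (1 / q).toReal *
        rearr μ F (t ^ (-(Module.finrank ℝ E / 2 : ℝ)) * σ / 2)) := by
  set γ := (1 / q).toReal
  set d : ℝ := (Module.finrank ℝ E : ℝ)
  set β := 2 * (μ (ball (0 : E) 1)).toReal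
  have hγ : 0 ≤ γ := ENNReal.toReal_nonneg
  rw [lorentzNorm_one, hq']
  calc _ ≤ ENNReal.ofReal (t ^ (d * a / 2)) * (2 ^ γ * ∫⁻ τ in Ioi 0,
        ENNReal.ofReal (τ ^ (a - 1) * Real.exp (-(t * (τ / β) ^ (2 / d)))) *
          (ENNReal.ofReal (τ / 2) ^ γ * rearr μ F (τ / 2))) := by
        refine mul_le_mul_right ?_ _
        rw [← lintegral_const_mul' _ _ (ENNReal.rpow_ne_top_of_nonneg hγ ENNReal.ofNat_ne_top)]
        exact setLIntegral_mono' measurableSet_Ioi fun τ hτ =>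
          ofReal_rpow_mul_rearr_heat_div_le μ F ht hτ hγ
    _ = _ := by
        rw [mul_left_comm, lintegral_Ioi_heat_rescale
          (Nat.cast_pos.mpr (Module.finrank_pos (R := ℝ) (M := E))) (by positivity) ht]

theorem exists_lorentzNorm_heat_le {q q' r : ℝ≥0∞} {a : ℝ} (ha : 0 < a)
    (hq' : (1 / q').toReal = a + (1 / q).toReal) (hr0 : r ≠ 0) (hr : r ≠ ∞) :
    ∃ C : ℝ≥0∞, 0 < C ∧ C < ∞ ∧ ∀ F : E → ℝ≥0∞, lorentzNorm μ F q r < ∞ →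
      (∀ t : ℝ, 0 < t →
        ENNReal.ofReal (t ^ (Module.finrank ℝ E * a / 2)) *
          lorentzNorm μ (fun ξ => ENNReal.ofReal (Real.exp (-(t * ‖ξ‖ ^ 2))) * F ξ) q' 1 ≤
        C * lorentzNorm μ F q r) ∧
      Tendsto (fun t : ℝ => ENNReal.ofReal (t ^ (Module.finrank ℝ E * a / 2)) *
          lorentzNorm μ (fun ξ => ENNReal.ofReal (Real.exp (-(t * ‖ξ‖ ^ 2))) * F ξ) q' 1)
        (𝓝[>] 0) (𝓝 0) := by
  set d : ℝ := (Module.finrank ℝ E : ℝ)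
  have hd : 0 < d := Nat.cast_pos.mpr Module.finrank_pos
  set γ := (1 / q).toReal
  set K := fun σ : ℝ => ENNReal.ofReal (σ ^ (a - 1) *
    Real.exp (-(σ / (2 * (μ (ball 0 1)).toReal)) ^ (2 / d)))
  have hK : AEMeasurable K (volume.restrict (Ioi 0)) := by fun_prop
  have hK_fin : ∫⁻ σ in Ioi 0, K σ < ∞ := lintegral_rpow_mul_exp_neg_div_rpow_lt_top ha
    (mul_pos two_pos (ENNReal.toReal_pos (measure_ball_pos μ _ one_pos).ne'
      measure_ball_lt_top.ne)) (by positivity)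
  have h2γ : (2 : ℝ≥0∞) ^ γ ≠ ∞ :=
    ENNReal.rpow_ne_top_of_nonneg ENNReal.toReal_nonneg ENNReal.ofNat_ne_top
  set B : ℝ≥0∞ := 2 ^ (γ + 1 / r.toReal)
  have hB : B ≠ ∞ := ENNReal.rpow_ne_top_of_nonneg (by positivity) ENNReal.ofNat_ne_top
  set J := ∫⁻ σ in Ioi 0, K σ
  refine ⟨2 ^ γ * J * B + 1, zero_lt_one.trans_le le_add_self,
    ENNReal.add_lt_top.mpr ⟨ENNReal.mul_lt_top (ENNReal.mul_lt_top h2γ.lt_top hK_fin) hB.lt_top,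
      ENNReal.one_lt_top⟩, fun F hF => ?_⟩
  set N := lorentzNorm μ F q r
  have hBN : B * N ≠ ∞ := ENNReal.mul_ne_top hB hF.ne
  set M := fun u : ℝ => ENNReal.ofReal (u / 2) ^ γ * rearr μ F (u / 2)
  have hM : Measurable M :=
    ((ENNReal.measurable_ofReal.pow_const γ).mul measurable_rearr).comp (measurable_id.div_const 2)
  have hMB : ∀ u, 0 < u → M u ≤ B * N := fun u hu =>
    ofReal_rpow_mul_rearr_le_lorentzNorm hr0 hr (half_pos hu)
  have hM_lim : Tendsto M atTop (𝓝 0) :=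
    (tendsto_ofReal_rpow_mul_rearr_atTop hr0 hr hF.ne).comp (tendsto_id.atTop_div_const two_pos)
  refine ⟨fun t ht => (ofReal_rpow_mul_lorentzNorm_heat_le μ F ht hq').trans ?_, ?_⟩
  · calc 2 ^ γ * ∫⁻ σ in Ioi 0, K σ * M (t ^ (-(d / 2)) * σ) ≤ 2 ^ γ * (J * (B * N)) :=
          mul_le_mul_right (setLIntegral_mul_comp_mul_le hBN hMB (by positivity)) _
      _ = 2 ^ γ * J * B * N := by ring
      _ ≤ (2 ^ γ * J * B + 1) * N := mul_le_mul_left le_self_add _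
  · have hlim := ENNReal.Tendsto.const_mul ((tendsto_setLIntegral_mul_comp_mul_atTop hK
      hK_fin.ne hM hBN hMB hM_lim).comp (tendsto_rpow_neg_nhdsGT_zero (by linarith : -(d / 2) < 0)))
      (Or.inr h2γ)
    rw [mul_zero] at hlim
    refine tendsto_of_tendsto_of_tendsto_of_le_of_le' tendsto_const_nhds hlim
      (Eventually.of_forall fun _ => zero_le) ?_
    filter_upwards [self_mem_nhdsWithin] with t ht
    exact ofReal_rpow_mul_lorentzNorm_heat_le μ F ht hq'

end HeatSmoothing

lemma one_div_dualExp_ofReal_toReal {x : ℝ} (hx : 1 < x) :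
    (1 / dualExp (ENNReal.ofReal x)).toReal = 1 - 1 / x := by
  have hx0 : 0 < x := zero_lt_one.trans hx
  rw [dualExp, one_div, inv_inv, one_div, ← ENNReal.ofReal_inv_of_pos hx0, ← ENNReal.ofReal_one,
    ← ENNReal.ofReal_sub _ (inv_nonneg.mpr hx0.le), ENNReal.toReal_ofReal
      (sub_nonneg.mpr (inv_le_one_of_one_le₀ hx.le)), one_div]

lemma sflNorm_cexp_neg_mul_norm_sq_mul (d : ℕ) (s : ℝ) (p r : ℝ≥0∞) (g : Esp d → ℂ) (t : ℝ) :
    sflNorm d s p r (fun ξ => Complex.exp (-(t * ‖ξ‖ ^ 2)) * g ξ) =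
      lorentzNorm volume (fun ξ => ENNReal.ofReal (Real.exp (-(t * ‖ξ‖ ^ 2))) *
        (ENNReal.ofReal (‖ξ‖ ^ s) * ‖g ξ‖₊)) (dualExp p) r := by
  unfold sflNorm
  congr 1
  funext ξ
  have hnorm : (‖Complex.exp (-(t * ‖ξ‖ ^ 2))‖₊ : ℝ≥0∞) =
      ENNReal.ofReal (Real.exp (-(t * ‖ξ‖ ^ 2))) := by
    rw [← Complex.norm_exp_ofReal, ofReal_norm]
    push_cast
    rfl
  rw [nnnorm_mul, ENNReal.coe_mul, hnorm, mul_left_comm]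

/-- Heat semigroup smoothing from `Ḣ^{d/p-1}_{𝓛^{p,r}}`: with `1 < p ≤ d`, `1 ≤ r < ∞`,
`1/p - 1/d < 1/p̃ < 1/p` and `α = d(1/p - 1/p̃)`, one has
`sup_{t>0} t^{α/2} ‖e^{tΔ}u₀‖_{Ḣ^{d/p-1}_{𝓛^{p̃,1}}} ≤ C ‖u₀‖_{Ḣ^{d/p-1}_{𝓛^{p,r}}}`
and `t^{α/2} ‖e^{tΔ}u₀‖_{Ḣ^{d/p-1}_{𝓛^{p̃,1}}} → 0` as `t → 0⁺`. -/
theorem heat_smoothing_subcritical (d : ℕ) (hd : 0 < d) (p pt : ℝ)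
    (hp1 : 1 < p) (hp2 : p ≤ d) (r : ℝ≥0∞) (hr1 : 1 ≤ r) (hr2 : r ≠ ∞)
    (hpt1 : 1 / p - 1 / d < 1 / pt) (hpt2 : 1 / pt < 1 / p) :
    ∃ C : ℝ≥0∞, 0 < C ∧ C < ∞ ∧ ∀ u0 : Esp d → ℂ,
      HsL d ((d : ℝ) / p - 1) (ENNReal.ofReal p) r u0 < ∞ →
      (∀ t : ℝ, 0 < t →
        ENNReal.ofReal (t ^ ((d * (1 / p - 1 / pt)) / 2)) *
          sflNorm d ((d : ℝ) / p - 1) (ENNReal.ofReal pt) 1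
            (fun ξ => Complex.exp (-(t * ‖ξ‖ ^ 2)) * 𝓕 u0 ξ) ≤
          C * HsL d ((d : ℝ) / p - 1) (ENNReal.ofReal p) r u0) ∧
      Tendsto (fun t : ℝ =>
          ENNReal.ofReal (t ^ ((d * (1 / p - 1 / pt)) / 2)) *
            sflNorm d ((d : ℝ) / p - 1) (ENNReal.ofReal pt) 1
              (fun ξ => Complex.exp (-(t * ‖ξ‖ ^ 2)) * 𝓕 u0 ξ))
        (nhdsWithin 0 (Set.Ioi 0)) (nhds 0) := by
  have : Nonempty (Fin d) := ⟨⟨0, hd⟩⟩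
  have hpt : 1 < pt := by
    have hpt0 : 0 < pt := one_div_pos.mp
      ((sub_nonneg.mpr (one_div_le_one_div_of_le (by linarith) hp2)).trans_lt hpt1)
    exact (div_lt_one hpt0).mp (hpt2.trans ((div_lt_one (by linarith)).mpr hp1))
  have hexp : (1 / dualExp (ENNReal.ofReal pt)).toReal =
      (1 / p - 1 / pt) + (1 / dualExp (ENNReal.ofReal p)).toReal := by
    rw [one_div_dualExp_ofReal_toReal hpt, one_div_dualExp_ofReal_toReal hp1]
    ring
  obtain ⟨C, hC0, hC, hheat⟩ := exists_lorentzNorm_heat_le (volume : Measure (Esp d))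
    (sub_pos.mpr hpt2) hexp (zero_lt_one.trans_le hr1).ne' hr2
  refine ⟨C, hC0, hC, fun u0 hu0 => ?_⟩
  simp only [sflNorm_cexp_neg_mul_norm_sq_mul]
  rw [finrank_euclideanSpace_fin] at hheat
  exact hheat _ hu0
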